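/- Let T be an endotree with in-order sequence x. Then for each i, (i, x_i) is an ascent top of x (i.e., i = 1 or x_{i-1} < x_i) if and only if v_i ∈ treetops(T) (i.e., i = 1 or v_i has a nonempty left subtree). -/

import Mathlib

inductive LTree where
  | nil : LTree
  | node : LTree → ℕ → LTree → LTree
deriving DecidableEq

namespace LTree

def size : LTree → ℕ
  | nil => 0
  | node L _ R => L.size + 1 + R.size

/-- The in-order sequence of labels. -/
def inorder : LTree → List ℕ
  | nil => []
  | node L r R => L.inorder ++ r :: R.inorder

/-- The maximum label (0 for the empty tree). -/
def maxL : LTree → ℕ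
  | nil => 0
  | node L r R => max r (max L.maxL R.maxL)

/-- Weakly decreasing along every root-to-leaf path. -/
def Decreasing : LTree → Prop
  | nil => True
  | node L r R => L.maxL ≤ r ∧ R.maxL ≤ r ∧ L.Decreasing ∧ R.Decreasing

/-- Strictly decreasing to the left: every label in a left subtree
is strictly smaller than the label of its parent. -/
def StrictLeft : LTree → Prop
  | nil => True
  | node L r R => L.maxL < r ∧ L.StrictLeft ∧ R.StrictLeft

/-- An endotree: decreasing, strictly decreasing to the left, labels in `[n]`. -/
def IsEndotree (T : LTree) : Prop :=
  T.Decreasing ∧ T.StrictLeft ∧ ∀ l ∈ T.inorder, 1 ≤ l ∧ l ≤ T.size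

/-- A regular endotree: the set of labels equals `[k]` for some `k ≤ n`. -/
def IsRegularEndotree (T : LTree) : Prop :=
  T.IsEndotree ∧ ∃ k ≤ T.size, ∀ l, l ∈ T.inorder ↔ (1 ≤ l ∧ l ≤ k)

end LTree

/-- An endofunction on `[n]`, identified with a word of length `n` over `[n]`. -/
def IsEndofun (x : List ℕ) : Prop := ∀ a ∈ x, 1 ≤ a ∧ a ≤ x.length

/-- A Cayley permutation: an endofunction whose image is `[k]` for some `k ≤ n`. -/
def IsCayley (x : List ℕ) : Prop :=
  IsEndofun x ∧ ∃ k ≤ x.length, ∀ j, j ∈ x ↔ (1 ≤ j ∧ j ≤ k)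

namespace LTree

/-- The list of (subtrees rooted at the) nodes of `T`, in in-order. -/
def nodes : LTree → List LTree
  | nil => []
  | node L r R => L.nodes ++ node L r R :: R.nodes

/-- Root label (0 for the empty tree). -/
def rootLabel : LTree → ℕ
  | nil => 0
  | node _ r _ => r

/-- Left subtree. -/
def leftT : LTree → LTree
  | nil => nil
  | node L _ _ => L

/-- Indices `i` (0-based) such that the `i`-th in-order node `v_{i+1}` is in
`treetops(T)`: either the first node or a node with nonempty left subtree. -/
def treetopsIdx (T : LTree) : Set ℕ :=
  {i | i < T.size ∧ (i = 0 ∨ (T.nodes.getD i nil).leftT ≠ nil)}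

/-- Indices `i` such that the label of the `i`-th in-order node does not occur
at any earlier in-order node. -/
def unseenIdx (T : LTree) : Set ℕ :=
  {i | i < T.size ∧
    ∀ j < i, (T.nodes.getD j nil).rootLabel ≠ (T.nodes.getD i nil).rootLabel}

/-- A Fishburn tree: a regular endotree with `treetops(T) = unseen(T)`. -/
def IsFishburnTree (T : LTree) : Prop :=
  T.IsRegularEndotree ∧ treetopsIdx T = unseenIdx T

end LTree

/-- The set of first occurrences of `x` together with their (0-based) indices. -/
def nubPairs (x : List ℕ) : Set (ℕ × ℕ) :=
  {q | q.1 < x.length ∧ q.2 = x.getD q.1 0 ∧ ∀ j < q.1, x.getD j 0 ≠ x.getD q.1 0}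

/-- The set of ascent tops of `x` (including the first entry) together with
their (0-based) indices. -/
def asctopsPairs (x : List ℕ) : Set (ℕ × ℕ) :=
  {q | q.1 < x.length ∧ q.2 = x.getD q.1 0 ∧
    (q.1 = 0 ∨ x.getD (q.1 - 1) 0 < x.getD q.1 0)}


/-!
Walking through the in-order sequence, the node `v_{i+1}` follows `v_i` in one of two ways.
If `v_{i+1}` has a nonempty left subtree, `v_i` is the last node of that subtree, so its
label is strictly smaller by strict left decrease. Otherwise `v_{i+1}` is the first node of
the right subtree of `v_i`, so its label is at most that of `v_i` by decrease. Hence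
`x_i < x_{i+1}` exactly when `v_{i+1}` has a nonempty left subtree.
-/

namespace LTree

@[simp]
lemma length_inorder (T : LTree) : T.inorder.length = T.size := by
  induction T with
  | nil => rfl
  | node L r R ihL ihR => simp [inorder, size, ihL, ihR]; omega

@[simp]
lemma length_nodes (T : LTree) : T.nodes.length = T.size := by
  induction T with
  | nil => rfl
  | node L r R ihL ihR => simp [nodes, size, ihL, ihR]; omega

lemma le_maxL_of_mem_inorder {T : LTree} {a : ℕ} (ha : a ∈ T.inorder) : a ≤ T.maxL := by
  induction T with
  | nil => simp [inorder] at ha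
  | node L r R ihL ihR =>
    simp only [inorder, List.mem_append, List.mem_cons] at ha
    simp only [maxL, le_max_iff]
    rcases ha with ha | rfl | ha
    · exact .inr (.inl (ihL ha))
    · exact .inl le_rfl
    · exact .inr (.inr (ihR ha))

lemma getD_inorder_le_maxL (T : LTree) (i : ℕ) : T.inorder.getD i 0 ≤ T.maxL := by
  rcases lt_or_ge i T.inorder.length with hi | hi
  · rw [List.getD_eq_getElem _ _ hi]
    exact le_maxL_of_mem_inorder (List.getElem_mem hi)
  · rw [List.getD_eq_default _ _ hi]
    exact Nat.zero_le _

lemma leftT_getD_nodes_zero (T : LTree) : (T.nodes.getD 0 nil).leftT = nil := by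
  induction T with
  | nil => rfl
  | node L r R ihL _ =>
    cases L with
    | nil => rfl
    | node LL s LR => rwa [nodes, List.getD_append _ _ _ _ (by simp [size])]

section getD

variable (L R : LTree) (r : ℕ)

lemma getD_inorder_node_of_lt {i : ℕ} (hi : i < L.size) :
    (node L r R).inorder.getD i 0 = L.inorder.getD i 0 :=
  List.getD_append _ _ _ _ (by simpa using hi)

lemma getD_inorder_node_size : (node L r R).inorder.getD L.size 0 = r := by
  simp [inorder]

lemma getD_inorder_node_add (j : ℕ) :
    (node L r R).inorder.getD (L.size + 1 + j) 0 = R.inorder.getD j 0 := by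
  rw [inorder, List.getD_append_right _ _ _ _ (by simp; omega)]
  simp [Nat.add_assoc, Nat.add_comm 1 j]

lemma getD_nodes_node_of_lt {i : ℕ} (hi : i < L.size) :
    (node L r R).nodes.getD i nil = L.nodes.getD i nil :=
  List.getD_append _ _ _ _ (by simpa using hi)

lemma getD_nodes_node_size : (node L r R).nodes.getD L.size nil = node L r R := by
  simp [nodes]

lemma getD_nodes_node_add (j : ℕ) :
    (node L r R).nodes.getD (L.size + 1 + j) nil = R.nodes.getD j nil := by
  rw [nodes, List.getD_append_right _ _ _ _ (by simp; omega)]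
  simp [Nat.add_assoc, Nat.add_comm 1 j]

end getD

lemma getD_inorder_lt_succ_iff {T : LTree} (hd : T.Decreasing) (hs : T.StrictLeft) {i : ℕ}
    (hi : i + 1 < T.size) :
    T.inorder.getD i 0 < T.inorder.getD (i + 1) 0 ↔ (T.nodes.getD (i + 1) nil).leftT ≠ nil := by
  induction T generalizing i with
  | nil => simp [size] at hi
  | node L r R ihL ihR =>
    obtain ⟨-, hdR, hdL', hdR'⟩ := hd
    obtain ⟨hsL, hsL', hsR'⟩ := hs
    rcases lt_trichotomy (i + 1) L.size with hlt | heq | hgt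
    · rw [getD_inorder_node_of_lt _ _ _ (by omega), getD_inorder_node_of_lt _ _ _ hlt,
        getD_nodes_node_of_lt _ _ _ hlt]
      exact ihL hdL' hsL' hlt
    · have hL : L ≠ nil := by rintro rfl; simp [size] at heq
      rw [getD_inorder_node_of_lt _ _ _ (by omega), heq, getD_inorder_node_size,
        getD_nodes_node_size]
      simpa [leftT, hL] using (getD_inorder_le_maxL L i).trans_lt hsL
    · obtain ⟨j, rfl⟩ : ∃ j, i = L.size + j := ⟨i - L.size, by omega⟩
      simp only [size] at hi
      cases j with
      | zero =>
        rw [Nat.add_zero, getD_inorder_node_size, ← Nat.add_zero (L.size + 1),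
          getD_inorder_node_add, getD_nodes_node_add, leftT_getD_nodes_zero]
        simpa using (getD_inorder_le_maxL R 0).trans hdR
      | succ j =>
        rw [show L.size + (j + 1) = L.size + 1 + j by omega,
          show L.size + 1 + j + 1 = L.size + 1 + (j + 1) by omega,
          getD_inorder_node_add, getD_inorder_node_add, getD_nodes_node_add]
        exact ihR hdR' hsR' (by omega)

end LTree

theorem asctop_iff_treetop_general (T : LTree) (h : T.IsEndotree) (i : ℕ) :
    (i, T.inorder.getD i 0) ∈ asctopsPairs T.inorder ↔ i ∈ T.treetopsIdx := by
  obtain ⟨hd, hs, -⟩ := h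
  simp only [asctopsPairs, LTree.treetopsIdx, Set.mem_ofPred_eq, LTree.length_inorder, true_and]
  refine and_congr_right fun hi => ?_
  cases i with
  | zero => simp
  | succ i => simpa using LTree.getD_inorder_lt_succ_iff hd hs hi

/-- for an endotree `T` with in-order sequence `x`, the pair
`(i, x_i)` is an ascent top of `x` iff the `i`-th in-order node belongs to
`treetops(T)`. -/
theorem asctop_iff_treetop (T : LTree) (h : T.IsEndotree) (i : ℕ) (hi : i < T.size) :
    (i, T.inorder.getD i 0) ∈ asctopsPairs T.inorder ↔ i ∈ T.treetopsIdx :=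
  asctop_iff_treetop_general T h i
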